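/- arXiv:2311.01362 — 8 statements merged into one kernel-verified Lean document; each statement's English description precedes it below -/
import Mathlib

section
/- Let N(n,k) denote the number of k-dimensional subspaces of the vector space (ZMod 2)^n (the Gaussian binomial coefficient [n choose k]_2). Then for every natural number n, ∑_{k=0}^{n} N(n,k) · 2^{k(k+1)/2} = ∏_{k=0}^{n-1} (2^{n-k} + 1). Consequently the number of n-qubit stabilizer states 2^n · ∏_{k=0}^{n-1}(2^{n-k}+1) equals 2^n times the number of standard-form check matrices. -/
/-- `gaussianBinom2 n k` is the number of `k`-dimensional subspaces of the
vector space `(ZMod 2)^n`, i.e. the Gaussian binomial coefficient `[n choose k]_2`. -/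
noncomputable def gaussianBinom2 (n k : ℕ) : ℕ :=
  Nat.card {S : Submodule (ZMod 2) (Fin n → ZMod 2) // Module.finrank (ZMod 2) S = k}

open Finset Module Submodule

noncomputable def gaussianFiberEquiv (n k : ℕ)
    (S : {S : Submodule (ZMod 2) (Fin n → ZMod 2) // finrank (ZMod 2) S = k}) :
    {s : {s : Fin k → (Fin n → ZMod 2) // LinearIndependent (ZMod 2) s} //
        Submodule.span (ZMod 2) (Set.range s.1) = S.1} ≃
      {t : Fin k → S.1 // LinearIndependent (ZMod 2) t} where
  toFun s := ⟨fun i => ⟨s.1.1 i, by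
      have := s.2 ▸ Submodule.subset_span (Set.mem_range_self (f := s.1.1) i); exact this⟩,
    by
      apply LinearIndependent.of_comp S.1.subtype
      exact s.1.2⟩
  invFun t := ⟨⟨fun i => (t.1 i : Fin n → ZMod 2),
      t.2.map' S.1.subtype (Submodule.ker_subtype _)⟩, by
      have hsp : Submodule.span (ZMod 2) (Set.range t.1) = ⊤ :=
        t.2.span_eq_top_of_card_eq_finrank' (by simp [S.2])
      show Submodule.span (ZMod 2) (Set.range (S.1.subtype ∘ t.1)) = S.1
      rw [Set.range_comp, ← Submodule.map_span, hsp, Submodule.map_subtype_top]⟩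
  left_inv s := by apply Subtype.ext; apply Subtype.ext; rfl
  right_inv t := by apply Subtype.ext; funext i; apply Subtype.ext; rfl

lemma gaussianBinom2_mul (n k : ℕ) (hk : k ≤ n) :
    gaussianBinom2 n k * ∏ i ∈ Finset.range k, (2 ^ k - 2 ^ i) =
      ∏ i ∈ Finset.range k, (2 ^ n - 2 ^ i) := by
  classical
  have hZ : Fintype.card (ZMod 2) = 2 := by simp
  have hfin : finrank (ZMod 2) (Fin n → ZMod 2) = n := by simp
  let f : {s : Fin k → (Fin n → ZMod 2) // LinearIndependent (ZMod 2) s} →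
      {S : Submodule (ZMod 2) (Fin n → ZMod 2) // finrank (ZMod 2) S = k} :=
    fun s => ⟨Submodule.span (ZMod 2) (Set.range s.1), by
      rw [finrank_span_eq_card s.2, Fintype.card_fin]⟩
  have hL : Nat.card {s : Fin k → (Fin n → ZMod 2) // LinearIndependent (ZMod 2) s} =
      ∏ i ∈ Finset.range k, (2 ^ n - 2 ^ i) := by
    rw [card_linearIndependent (by rw [hfin]; exact hk)]
    rw [hZ, hfin, ← Fin.prod_univ_eq_prod_range]
  have hfib : ∀ S, Nat.card {s // f s = S} = ∏ i ∈ Finset.range k, (2 ^ k - 2 ^ i) := by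
    intro S
    have e : {s // f s = S} ≃ {t : Fin k → S.1 // LinearIndependent (ZMod 2) t} :=
      (Equiv.subtypeEquivRight (fun s => by
        constructor
        · intro h; exact congrArg Subtype.val h
        · intro h; exact Subtype.ext h)).trans (gaussianFiberEquiv n k S)
    rw [Nat.card_congr e, card_linearIndependent (by rw [S.2]),
      hZ, S.2, ← Fin.prod_univ_eq_prod_range]
  haveI : Fintype {S : Submodule (ZMod 2) (Fin n → ZMod 2) // finrank (ZMod 2) S = k} :=
    Fintype.ofFinite _
  haveI : ∀ S, Fintype {s // f s = S} := fun S => Fintype.ofFinite _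
  haveI : Fintype {s : Fin k → (Fin n → ZMod 2) // LinearIndependent (ZMod 2) s} :=
    Fintype.ofFinite _
  calc gaussianBinom2 n k * ∏ i ∈ Finset.range k, (2 ^ k - 2 ^ i)
      = ∑ S : {S : Submodule (ZMod 2) (Fin n → ZMod 2) // finrank (ZMod 2) S = k},
          Nat.card {s // f s = S} := by
        rw [Finset.sum_congr rfl (fun S _ => hfib S), Finset.sum_const, gaussianBinom2,
          Nat.card_eq_fintype_card, smul_eq_mul, Finset.card_univ]
    _ = ∑ S : {S : Submodule (ZMod 2) (Fin n → ZMod 2) // finrank (ZMod 2) S = k},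
          Fintype.card {s // f s = S} := by
        simp [Nat.card_eq_fintype_card]
    _ = Fintype.card ((S : {S : Submodule (ZMod 2) (Fin n → ZMod 2) // finrank (ZMod 2) S = k})
          × {s // f s = S}) := by rw [Fintype.card_sigma]
    _ = Nat.card {s : Fin k → (Fin n → ZMod 2) // LinearIndependent (ZMod 2) s} := by
        rw [Nat.card_eq_fintype_card]
        exact Fintype.card_congr (Equiv.sigmaFiberEquiv f)
    _ = _ := hL

namespace GB2

noncomputable def A (n k : ℕ) : ℚ := ∏ i ∈ Finset.range k, ((2:ℚ) ^ n - 2 ^ i)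

noncomputable def g (n k : ℕ) : ℚ := A n k / A k k

def e (k : ℕ) : ℕ := k * (k + 1) / 2

lemma e_zero : e 0 = 0 := rfl

lemma e_succ (k : ℕ) : e (k + 1) = e k + (k + 1) := by
  unfold e
  have h : (k + 1) * (k + 1 + 1) = k * (k + 1) + (k + 1) * 2 := by ring
  rw [h, Nat.add_mul_div_right _ _ two_pos]

lemma A_pos (k : ℕ) : 0 < A k k := by
  apply Finset.prod_pos
  intro i hi
  have : (2:ℚ) ^ i < 2 ^ k := by
    apply pow_lt_pow_right₀ (by norm_num) (Finset.mem_range.mp hi)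
  linarith

lemma A_ne (k : ℕ) : A k k ≠ 0 := (A_pos k).ne'

lemma A_eq_zero {n k : ℕ} (h : n < k) : A n k = 0 :=
  Finset.prod_eq_zero (Finset.mem_range.mpr h) (by ring)

lemma A_succ_succ (n k : ℕ) :
    A (n + 1) (k + 1) = 2 ^ k * (2 ^ (n + 1) - 1) * A n k := by
  rw [A, Finset.prod_range_succ']
  have h : ∀ i, (2:ℚ) ^ (n+1) - 2 ^ (i+1) = 2 * (2 ^ n - 2 ^ i) := by
    intro i; ring
  rw [Finset.prod_congr rfl (fun i _ => h i), Finset.prod_mul_distrib,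
    Finset.prod_const, Finset.card_range, A]
  ring

lemma A_succ (n k : ℕ) : A n (k + 1) = A n k * (2 ^ n - 2 ^ k) :=
  Finset.prod_range_succ _ _

lemma g_zero (n : ℕ) : g n 0 = 1 := by simp [g, A]

lemma g_diag_succ (n : ℕ) : g n (n + 1) = 0 := by
  rw [g, A_eq_zero (by omega), zero_div]

lemma g_pascal (n k : ℕ) :
    g (n + 1) (k + 1) = g n (k + 1) + 2 ^ (n - k) * g n k := by
  rcases le_or_gt k n with h | h
  · have h2 : (2:ℚ) ^ (n - k) = 2 ^ n / 2 ^ k := by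
      rw [eq_div_iff (by positivity), ← pow_add, Nat.sub_add_cancel h]
    have h3 : (2:ℚ) ^ (k + 1) - 1 ≠ 0 := by
      have : (1:ℚ) < 2 ^ (k + 1) := one_lt_pow₀ (by norm_num) (by omega)
      linarith
    have h4 : (2:ℚ) ^ k ≠ 0 := by positivity
    have h5 := A_ne k
    rw [g, g, g, A_succ_succ, A_succ_succ k k, A_succ, h2]
    field_simp
    ring
  · rw [g, g, g, A_eq_zero (show n + 1 < k + 1 by omega),
      A_eq_zero (show n < k + 1 by omega), A_eq_zero h]
    simp

lemma sum_g (n : ℕ) :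
    ∑ k ∈ Finset.range (n + 1), g n k * 2 ^ e k =
      ∏ j ∈ Finset.range n, ((2:ℚ) ^ (n - j) + 1) := by
  induction n with
  | zero => simp [g_zero, e_zero]
  | succ n ih =>
    have hpascal : ∀ k ∈ Finset.range (n + 1),
        g (n + 1) (k + 1) * 2 ^ e (k + 1) =
          g n (k + 1) * 2 ^ e (k + 1) + 2 ^ (n + 1) * (g n k * 2 ^ e k) := by
      intro k hk
      have hk' : k ≤ n := by have := Finset.mem_range.mp hk; omega
      rw [g_pascal, e_succ, pow_add, add_mul]
      congr 1
      rw [show (2:ℚ) ^ (n + 1) = 2 ^ (n - k) * 2 ^ (k + 1) by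
        rw [← pow_add]; congr 1; omega]
      ring
    rw [Finset.sum_range_succ' _ (n + 1), Finset.sum_congr rfl hpascal,
      Finset.sum_add_distrib, ← Finset.mul_sum, ih, g_zero, e_zero, pow_zero, mul_one]
    have h1 : ∑ k ∈ Finset.range (n + 1), g n (k + 1) * 2 ^ e (k + 1)
        = (∑ k ∈ Finset.range (n + 1), g n k * 2 ^ e k) - 1 := by
      have h2 : ∑ k ∈ Finset.range (n + 2), g n k * 2 ^ e k
          = ∑ k ∈ Finset.range (n + 1), g n (k + 1) * 2 ^ e (k + 1) + g n 0 * 2 ^ e 0 :=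
        Finset.sum_range_succ' _ (n + 1)
      rw [Finset.sum_range_succ _ (n + 1), g_diag_succ, zero_mul, add_zero,
        g_zero, e_zero, pow_zero, mul_one] at h2
      linarith
    rw [h1, ih, Finset.prod_range_succ' _ n]
    have h3 : ∀ j ∈ Finset.range n, (2:ℚ) ^ (n + 1 - (j + 1)) + 1 = 2 ^ (n - j) + 1 := by
      intro j hj; congr 2; omega
    rw [Finset.prod_congr rfl h3]
    simp only [Nat.sub_zero]
    ring

lemma cast_A (m k : ℕ) (h : k ≤ m) :
    ((∏ i ∈ Finset.range k, (2 ^ m - 2 ^ i) : ℕ) : ℚ) = A m k := by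
  rw [Nat.cast_prod, A]
  apply Finset.prod_congr rfl
  intro i hi
  have hle : 2 ^ i ≤ 2 ^ m :=
    Nat.pow_le_pow_right (by norm_num) (le_trans (Nat.le_of_lt (Finset.mem_range.mp hi)) h)
  push_cast [hle]
  ring

lemma cast_gaussianBinom2 (n k : ℕ) (h : k ≤ n) :
    (gaussianBinom2 n k : ℚ) = g n k := by
  have hc := congrArg (Nat.cast : ℕ → ℚ) (gaussianBinom2_mul n k h)
  rw [Nat.cast_mul, cast_A k k le_rfl, cast_A n k h] at hc
  rw [g, eq_div_iff (A_ne k)]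
  exact hc

end GB2

/-- The `q = 2` instance of the `q`-binomial theorem used to count stabilizer groups:
`∑_{k=0}^{n} [n choose k]_2 · 2^{k(k+1)/2} = ∏_{k=0}^{n-1} (2^{n-k} + 1)`, and consequently
the number of `n`-qubit stabilizer states `2^n · ∏_{k=0}^{n-1} (2^{n-k} + 1)` equals `2^n`
times the number of standard-form check matrices. -/
theorem sum_gaussianBinom2_mul_two_pow (n : ℕ) :
    (∑ k ∈ Finset.range (n + 1), gaussianBinom2 n k * 2 ^ (k * (k + 1) / 2)) =
      ∏ k ∈ Finset.range n, (2 ^ (n - k) + 1) ∧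
    2 ^ n * ∏ k ∈ Finset.range n, (2 ^ (n - k) + 1) =
      2 ^ n * ∑ k ∈ Finset.range (n + 1), gaussianBinom2 n k * 2 ^ (k * (k + 1) / 2) := by
  have key : (∑ k ∈ Finset.range (n + 1), gaussianBinom2 n k * 2 ^ (k * (k + 1) / 2)) =
      ∏ k ∈ Finset.range n, (2 ^ (n - k) + 1) := by
    have hQ : ((∑ k ∈ Finset.range (n + 1), gaussianBinom2 n k * 2 ^ (k * (k + 1) / 2) : ℕ) : ℚ)
        = ((∏ k ∈ Finset.range n, (2 ^ (n - k) + 1) : ℕ) : ℚ) := by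
      push_cast
      rw [← GB2.sum_g n]
      apply Finset.sum_congr rfl
      intro k hk
      rw [GB2.cast_gaussianBinom2 n k (by have := Finset.mem_range.mp hk; omega : k ≤ n)]
      rfl
    exact_mod_cast hQ
  exact ⟨key, by rw [key]⟩
end

section
/- For every natural number n there exist 2^n + 1 linear subspaces L_0, …, L_{2^n} of (ZMod 2)^{2n}, each of dimension n, each totally isotropic with respect to the symplectic form ω((x,z),(x',z')) = x·z' + z·x' (i.e., ω vanishes on each L_i × L_i), such that L_i ∩ L_j = {0} for all i ≠ j. Consequently the nonzero vectors of the L_i partition (ZMod 2)^{2n} \ {0} into 2^n + 1 sets of size 2^n − 1. -/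
/-!
Identify `F_2^n` with the field `F = GF(2^n)`, reading `x` in a basis and `z` in the dual basis
for the trace form, so that `x · z' = Tr (x z')`. The `2^n + 1` lines `{(x, a x)}` (`a ∈ F`) and
`{(0, z)}` of the `F`-plane `F × F` are `n`-dimensional over `F_2`, meet pairwise in `0`, cover
the plane, and are totally isotropic because `Tr (x · a x' + a x · x') = Tr (2 a x x') = 0`.
-/

open Module LinearMap

section Spread

variable (K : Type*) {F : Type*} [CommRing K] [Field F] [Algebra K F]

def spread : Option F → Submodule K (F × F)
  | none => ker (fst K F F)
  | some a => (mulLeft K a).graph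

variable {K}

@[simp]
lemma mem_spread_none {p : F × F} : p ∈ spread K none ↔ p.1 = 0 := Iff.rfl

@[simp]
lemma mem_spread_some {a : F} {p : F × F} : p ∈ spread K (some a) ↔ p.2 = a * p.1 := Iff.rfl

lemma finrank_spread (o : Option F) : finrank K (spread K o) = finrank K F := by
  cases o with
  | none => rw [spread, ker_fst, finrank_range_of_inj inr_injective]
  | some a =>
    rw [spread, graph_eq_range_prod, finrank_range_of_inj]
    exact fun x y h => congrArg Prod.fst h

lemma spread_inf_spread {o o' : Option F} (h : o ≠ o') : spread K o ⊓ spread K o' = ⊥ := by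
  refine eq_bot_iff.2 fun p ⟨hp, hp'⟩ => (Submodule.mem_bot K).2 ?_
  rcases o with _ | a <;> rcases o' with _ | b
  · exact absurd rfl h
  · simp_all [Prod.ext_iff]
  · simp_all [Prod.ext_iff]
  · have hab : a - b ≠ 0 := sub_ne_zero.2 fun hab => h (hab ▸ rfl)
    have hp1 : p.1 = 0 := by
      refine (mul_eq_zero.1 ?_).resolve_left hab
      rw [sub_mul, ← mem_spread_some.1 hp, ← mem_spread_some.1 hp', sub_self]
    exact Prod.ext hp1 (by rw [mem_spread_some.1 hp, hp1, mul_zero]; rfl)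

lemma exists_mem_spread (p : F × F) : ∃ o, p ∈ spread K o := by
  by_cases h : p.1 = 0
  · exact ⟨none, h⟩
  · exact ⟨some (p.2 * p.1⁻¹), (inv_mul_cancel_right₀ h p.2).symm⟩

lemma mul_add_mul_eq_zero_of_mem_spread [CharP F 2] {o : Option F} {p q : F × F}
    (hp : p ∈ spread K o) (hq : q ∈ spread K o) : p.1 * q.2 + p.2 * q.1 = 0 := by
  cases o with
  | none => simp_all
  | some a =>
    rw [mem_spread_some.1 hp, mem_spread_some.1 hq, mul_left_comm, mul_assoc,
      CharTwo.add_self_eq_zero]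

end Spread

lemma LinearMap.BilinForm.sum_repr_mul_dualBasis_repr {K V ι : Type*} [Field K] [AddCommGroup V]
    [Module K V] [Fintype ι] [DecidableEq ι] {B : LinearMap.BilinForm K V} (hB : B.Nondegenerate)
    (b : Basis ι K V) (x y : V) :
    ∑ i, b.repr x i * (B.dualBasis hB b).repr y i = B y x := by
  conv_rhs => rw [← b.sum_repr x]
  simp only [BilinForm.dualBasis_repr_apply, map_sum, map_smul, smul_eq_mul]

section Coordinates

variable {K F ι : Type*} [Field K] [Field F] [Algebra K F] [FiniteDimensional K F]
  [Algebra.IsSeparable K F] [Fintype ι] [DecidableEq ι]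

noncomputable def traceDualCoords (b : Basis ι K F) :
    (F × F) ≃ₗ[K] (ι → K) × (ι → K) :=
  b.equivFun.prodCongr ((Algebra.traceForm K F).dualBasis (traceForm_nondegenerate K F) b).equivFun

lemma sum_traceDualCoords (b : Basis ι K F) (p q : F × F) :
    ∑ i, (traceDualCoords b p).1 i * (traceDualCoords b q).2 i +
      ∑ i, (traceDualCoords b p).2 i * (traceDualCoords b q).1 i =
      Algebra.trace K F (p.1 * q.2 + p.2 * q.1) := by
  simp only [traceDualCoords, LinearEquiv.prodCongr_apply, Basis.equivFun_apply]
  simp_rw [mul_comm ((LinearMap.BilinForm.dualBasis _ _ b).repr p.2 _)]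
  rw [BilinForm.sum_repr_mul_dualBasis_repr, BilinForm.sum_repr_mul_dualBasis_repr,
    Algebra.traceForm_apply, Algebra.traceForm_apply, map_add, mul_comm q.2]

noncomputable def isotropicCover (b : Basis ι K F) (o : Option F) :
    Submodule K ((ι → K) × (ι → K)) :=
  (spread K o).map (traceDualCoords b).toLinearMap

lemma finrank_isotropicCover (b : Basis ι K F) (o : Option F) :
    finrank K (isotropicCover b o) = Fintype.card ι := by
  rw [isotropicCover, LinearEquiv.finrank_map_eq, finrank_spread, finrank_eq_card_basis b]

lemma isotropicCover_isotropic [CharP F 2] (b : Basis ι K F) {o : Option F}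
    {u w : (ι → K) × (ι → K)} (hu : u ∈ isotropicCover b o)
    (hw : w ∈ isotropicCover b o) :
    ∑ i, u.1 i * w.2 i + ∑ i, u.2 i * w.1 i = 0 := by
  rw [isotropicCover, Submodule.mem_map_equiv] at hu hw
  rw [← (traceDualCoords b).apply_symm_apply u, ← (traceDualCoords b).apply_symm_apply w,
    sum_traceDualCoords, mul_add_mul_eq_zero_of_mem_spread hu hw, map_zero]

lemma isotropicCover_inf_isotropicCover (b : Basis ι K F) {o o' : Option F} (h : o ≠ o') :
    isotropicCover b o ⊓ isotropicCover b o' = ⊥ := by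
  rw [isotropicCover, isotropicCover, ← Submodule.map_inf _ (traceDualCoords b).injective,
    spread_inf_spread h, Submodule.map_bot]

lemma exists_mem_isotropicCover (b : Basis ι K F) (v : (ι → K) × (ι → K)) :
    ∃ o, v ∈ isotropicCover b o := by
  simpa only [isotropicCover, Submodule.mem_map_equiv] using exists_mem_spread (K := K) _

end Coordinates

/-- Existence of a cover set / maximal family of mutually unbiased bases: there are
`2^n + 1` Lagrangian subspaces of `F_2^{2n}` (each of dimension `n` and totally isotropic
for the symplectic form `ω((x,z),(x',z')) = x·z' + z·x'`) that pairwise intersect trivially;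
consequently their nonzero vectors partition `F_2^{2n} \ {0}` into `2^n + 1` sets of size
`2^n − 1` (so every nonzero vector lies in one of them). -/
theorem exists_isotropic_cover (n : ℕ) :
    ∃ L : Fin (2 ^ n + 1) →
        Submodule (ZMod 2) ((Fin n → ZMod 2) × (Fin n → ZMod 2)),
      (∀ i, Module.finrank (ZMod 2) (L i) = n) ∧
      (∀ i, ∀ u ∈ L i, ∀ w ∈ L i,
        ∑ k, u.1 k * w.2 k + ∑ k, u.2 k * w.1 k = 0) ∧
      (∀ i j, i ≠ j → L i ⊓ L j = ⊥) ∧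
      (∀ v : (Fin n → ZMod 2) × (Fin n → ZMod 2), v ≠ 0 → ∃ i, v ∈ L i) := by
  rcases eq_or_ne n 0 with rfl | hn
  · exact ⟨fun _ => ⊥, by simp, by simp, by simp,
      fun v hv => (hv (Subsingleton.elim v 0)).elim⟩
  let F := GaloisField 2 n
  let b : Basis (Fin n) (ZMod 2) F := finBasisOfFinrankEq _ _ (GaloisField.finrank 2 hn)
  have : Fintype F := Fintype.ofFinite F
  let σ : Fin (2 ^ n + 1) ≃ Option F := Fintype.equivOfCardEq <| by
    rw [Fintype.card_option, Fintype.card_fin, ← Nat.card_eq_fintype_card,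
      GaloisField.card 2 n hn]
  refine ⟨fun i => isotropicCover b (σ i), fun i => ?_,
    fun i _ hu _ hw => isotropicCover_isotropic b hu hw,
    fun i j hij => isotropicCover_inf_isotropicCover b (σ.injective.ne hij), fun v _ => ?_⟩
  · rw [finrank_isotropicCover, Fintype.card_fin]
  · obtain ⟨o, ho⟩ := exists_mem_isotropicCover b v
    exact ⟨σ.symm o, by simpa only [σ.apply_symm_apply] using ho⟩
end

section
/- For every natural number n there exists a family of 2^n matrices X_1, …, X_{2^n} ∈ (ZMod 2)^{n×n}, each symmetric (X_kᵀ = X_k), such that for every nonzero vector v ∈ (ZMod 2)^n, the map k ↦ X_k · v is a bijection from {1, …, 2^n} onto (ZMod 2)^n; that is, {X_k v : 1 ≤ k ≤ 2^n} = F_2^n. -/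
open Matrix

/-!
Identify `F_2^n` with `L = GF(2^n)` through a basis `b` and index the family by the elements
`a ∈ L`, taking `X_a i j = Tr(a b_i b_j)`; these matrices are symmetric because `L` is
commutative. If `v` is the coordinate vector of `w ≠ 0`, then `X_a v` is the vector
`(Tr(a w b_i))_i`, the coordinates of the functional `Tr(a w ·)` in the dual basis. As `a` runs
over `L`, so does `a w`, and nondegeneracy of the trace form makes `x ↦ Tr(x ·)` a bijection
onto the dual space.
-/

section TraceMulMatrix

variable {K L ι : Type*} [Field K] [Field L] [Algebra K L] (b : Module.Basis ι K L)

noncomputable def traceMulMatrix (a : L) : Matrix ι ι K :=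
  Matrix.of fun i j => Algebra.trace K L (a * b i * b j)

theorem traceMulMatrix_transpose (a : L) : (traceMulMatrix b a)ᵀ = traceMulMatrix b a := by
  ext i j
  simp only [traceMulMatrix, transpose_apply, of_apply, mul_right_comm]

variable [Fintype ι]

theorem traceMulMatrix_mulVec_equivFun (a w : L) :
    traceMulMatrix b a *ᵥ b.equivFun w = fun i => Algebra.trace K L (a * w * b i) := by
  ext i
  conv_rhs => rw [← b.sum_equivFun w]
  simp only [traceMulMatrix, mulVec, dotProduct, of_apply, Finset.mul_sum, Finset.sum_mul,
    map_sum, mul_smul_comm, smul_mul_assoc, map_smul, smul_eq_mul]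
  exact Finset.sum_congr rfl fun j _ => by rw [mul_comm, mul_right_comm]

variable [FiniteDimensional K L] [Algebra.IsSeparable K L] [DecidableEq ι]

theorem bijective_traceMulMatrix_mulVec {v : ι → K} (hv : v ≠ 0) :
    Function.Bijective fun a => traceMulMatrix b a *ᵥ v := by
  obtain ⟨w, rfl⟩ := b.equivFun.surjective v
  have hw : w ≠ 0 := by rintro rfl; exact hv (map_zero _)
  have hfactor : (fun a => traceMulMatrix b a *ᵥ b.equivFun w) =
      b.dualBasis.equivFun ∘ (Algebra.traceForm K L).toDual (traceForm_nondegenerate K L) ∘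
        Equiv.mulRight₀ w hw := by
    funext a
    rw [traceMulMatrix_mulVec_equivFun]
    ext i
    simp [Module.Basis.dualBasis_equivFun, LinearMap.BilinForm.toDual_def]
  rw [hfactor]
  exact b.dualBasis.equivFun.bijective.comp
    (LinearEquiv.bijective _ |>.comp (Equiv.mulRight₀ w hw).bijective)

end TraceMulMatrix

/-- There is a family of `2^n` symmetric matrices over `F_2` such that for every nonzero
vector `v ∈ F_2^n` the map `k ↦ X_k v` is a bijection onto `F_2^n`. -/
theorem exists_symmetric_matrix_family (n : ℕ) :
    ∃ X : Fin (2 ^ n) → Matrix (Fin n) (Fin n) (ZMod 2),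
      (∀ k, (X k)ᵀ = X k) ∧
      ∀ v : Fin n → ZMod 2, v ≠ 0 →
        Function.Bijective fun k => (X k) *ᵥ v := by
  -- `GaloisField 2 0` is `ZMod 2`, of degree 1, so `n = 0` is handled separately.
  rcases eq_or_ne n 0 with rfl | hn
  · exact ⟨fun _ => 0, fun _ => rfl, fun v hv => absurd (Subsingleton.elim v 0) hv⟩
  let L := GaloisField 2 n
  have : Fintype L := Fintype.ofFinite L
  let b : Module.Basis (Fin n) (ZMod 2) L :=
    (Module.finBasis (ZMod 2) L).reindex (finCongr (GaloisField.finrank 2 hn))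
  let e : Fin (2 ^ n) ≃ L := Fintype.equivOfCardEq <| by
    rw [Fintype.card_fin, ← Nat.card_eq_fintype_card, GaloisField.card 2 n hn]
  exact ⟨fun k => traceMulMatrix b (e k), fun k => traceMulMatrix_transpose b (e k),
    fun v hv => (bijective_traceMulMatrix_mulVec b hv).comp e.bijective⟩
end

section
/- Let f be an irreducible polynomial of degree n over ZMod 2, let K = F_2[x]/(f) with power basis {x^0, x^1, …, x^{n-1}}, and for 0 ≤ i ≤ n−1 define the matrix C_i ∈ (ZMod 2)^{n×n} by letting (C_i)_{p,q} be the coefficient of x^i in the expansion of x^{p+q} ∈ K in the power basis (0 ≤ p, q ≤ n−1). Then for every nonzero vector v ∈ (ZMod 2)^n, the family of vectors {C_0 v, C_1 v, …, C_{n-1} v} is linearly independent over ZMod 2 (equivalently, it is a basis of F_2^n). Consequently the 2^n symmetric matrices {∑_{i=0}^{n-1} a_i C_i : a ∈ F_2^n} satisfy that for every nonzero v, their images of v exhaust all of F_2^n. -/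
open Matrix Polynomial

/-- For an irreducible polynomial `f` of degree `n` over `F_2`, the coefficient matrices
`C_i` of the matrix `C(x) ∈ (F_2[x]/(f))^{n×n}` with entries `x^{p+q}`:
`(C_i)_{p,q}` is the coefficient of `x^i` in the expansion of `x^{p+q}` in the power
basis `{x^0, …, x^{n-1}}`, i.e. the `i`-th coefficient of `X^{p+q} mod f`. -/
noncomputable def coeffMat (n : ℕ) (f : Polynomial (ZMod 2)) (i : Fin n) :
    Matrix (Fin n) (Fin n) (ZMod 2) :=
  Matrix.of fun p q => ((X ^ ((p : ℕ) + (q : ℕ))) %ₘ f).coeff (i : ℕ)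

/-- For every nonzero `v ∈ F_2^n` the family `{C_0 v, …, C_{n-1} v}` is linearly
independent over `F_2`; consequently the `2^n` symmetric matrices `∑ᵢ a_i C_i` send `v`
onto all of `F_2^n`. -/
theorem coeffMat_mulVec_linearIndependent (n : ℕ) (f : Polynomial (ZMod 2))
    (hf : Irreducible f) (hdeg : f.natDegree = n) :
    (∀ v : Fin n → ZMod 2, v ≠ 0 →
        LinearIndependent (ZMod 2) fun i : Fin n => (coeffMat n f i) *ᵥ v) ∧
    (∀ v : Fin n → ZMod 2, v ≠ 0 → ∀ w : Fin n → ZMod 2,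
        ∃ a : Fin n → ZMod 2, (∑ i, a i • coeffMat n f i) *ᵥ v = w) := by
  subst hdeg
  set n := f.natDegree with hn
  have hf0 : f ≠ 0 := hf.ne_zero
  have hone : ∀ a : ZMod 2, a ≠ 0 → a = 1 := by decide
  have hm : f.Monic := hone _ (leadingCoeff_ne_zero.mpr hf0)
  have hnpos : 0 < n := hf.natDegree_pos
  -- generic coeff lemma for polys of the form ∑ c q • X^q
  have hcoeff : ∀ (c : Fin n → ZMod 2) (q : Fin n),
      (∑ p : Fin n, Polynomial.C (c p) * X ^ (p : ℕ)).coeff (q : ℕ) = c q := by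
    intro c q
    rw [finset_sum_coeff]
    simp only [coeff_C_mul, coeff_X_pow]
    rw [Finset.sum_eq_single q]
    · simp
    · intro b _ hb
      simp only [Fin.val_eq_val, mul_ite, mul_one, mul_zero, ite_eq_right_iff]
      exact fun h => absurd h.symm hb
    · simp
  have hdeglt : ∀ (c : Fin n → ZMod 2),
      (∑ p : Fin n, Polynomial.C (c p) * X ^ (p : ℕ)).degree < f.degree := by
    intro c
    refine lt_of_le_of_lt (degree_sum_le _ _) ?_
    rw [Finset.sup_lt_iff (bot_lt_iff_ne_bot.mpr fun h => hf0 (degree_eq_bot.mp h))]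
    intro p _
    refine lt_of_le_of_lt (degree_C_mul_X_pow_le _ _) ?_
    rw [degree_eq_natDegree hf0]
    exact_mod_cast p.isLt
  have hne : ∀ (c : Fin n → ZMod 2), c ≠ 0 →
      (∑ p : Fin n, Polynomial.C (c p) * X ^ (p : ℕ)) ≠ 0 := by
    intro c hc h0
    apply hc
    funext q
    have := hcoeff c q
    rw [h0] at this
    simpa using this.symm
  -- the main matrix
  have main : ∀ v : Fin n → ZMod 2, v ≠ 0 →
      IsUnit (Matrix.of fun (i p : Fin n) =>
        ((X ^ (p : ℕ) * (∑ q : Fin n, Polynomial.C (v q) * X ^ (q : ℕ))) %ₘ f).coeff (i : ℕ)) := by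
    intro v hv
    set P := ∑ q : Fin n, Polynomial.C (v q) * X ^ (q : ℕ) with hP
    rw [← Matrix.mulVec_injective_iff_isUnit]
    intro c d hcd
    -- reduce to kernel
    suffices h : ∀ c : Fin n → ZMod 2,
        (Matrix.of fun (i p : Fin n) => ((X ^ (p : ℕ) * P) %ₘ f).coeff (i : ℕ)) *ᵥ c = 0 → c = 0 by
      have := h (c - d) ?_
      · exact sub_eq_zero.mp this
      · rw [Matrix.mulVec_sub, hcd, sub_self]
    intro c hc
    set Q := ∑ p : Fin n, Polynomial.C (c p) * X ^ (p : ℕ) with hQ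
    have key : (Q * P) %ₘ f = 0 := by
      have hrw : (Q * P) %ₘ f = ∑ p : Fin n, c p • ((X ^ (p : ℕ) * P) %ₘ f) := by
        rw [hQ, Finset.sum_mul]
        rw [show ((∑ p : Fin n, Polynomial.C (c p) * X ^ (p : ℕ) * P) %ₘ f)
            = Polynomial.modByMonicHom f (∑ p : Fin n, Polynomial.C (c p) * X ^ (p : ℕ) * P) from rfl]
        rw [map_sum]
        congr 1
        funext p
        rw [mul_assoc, ← smul_eq_C_mul]
        simp [Polynomial.modByMonicHom, smul_modByMonic]
      ext j
      by_cases hj : j < n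
      · have := congrFun hc ⟨j, hj⟩
        simp only [Matrix.mulVec, Matrix.of_apply, dotProduct, Pi.zero_apply] at this
        rw [hrw, finset_sum_coeff]
        simp only [coeff_smul, smul_eq_mul, coeff_zero]
        rw [← this]
        congr 1
        funext p
        ring
      · rw [coeff_zero]
        apply coeff_eq_zero_of_degree_lt
        refine lt_of_lt_of_le (degree_modByMonic_lt _ hm) ?_
        rw [degree_eq_natDegree hf0]
        exact_mod_cast Nat.le_of_not_lt hj
    have hdvd : f ∣ Q * P := (modByMonic_eq_zero_iff_dvd hm).mp key
    have hP0 : P ≠ 0 := hne v hv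
    have hQdvd : f ∣ Q := by
      rcases (hf.prime.dvd_mul.mp hdvd) with h | h
      · exact h
      · exact absurd (eq_zero_of_dvd_of_degree_lt h (hdeglt v)) hP0
    have hQ0 : Q = 0 := eq_zero_of_dvd_of_degree_lt hQdvd (hdeglt c)
    funext q
    have := hcoeff c q
    rw [← hQ, hQ0] at this
    simpa using this.symm
  -- relate coeffMat mulVec to the matrix
  have hrel : ∀ (v : Fin n → ZMod 2) (i p : Fin n),
      ((coeffMat n f i) *ᵥ v) p =
      ((X ^ (p : ℕ) * (∑ q : Fin n, Polynomial.C (v q) * X ^ (q : ℕ))) %ₘ f).coeff (i : ℕ) := by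
    intro v i p
    rw [Finset.mul_sum,
      show ((∑ q : Fin n, X ^ (p:ℕ) * (Polynomial.C (v q) * X ^ (q : ℕ))) %ₘ f)
        = Polynomial.modByMonicHom f _ from rfl, map_sum, finset_sum_coeff]
    simp only [Matrix.mulVec, dotProduct, coeffMat, Matrix.of_apply]
    congr 1
    funext q
    rw [show X ^ (p:ℕ) * (Polynomial.C (v q) * X ^ (q : ℕ)) = v q • X ^ ((p:ℕ)+(q:ℕ)) by
      rw [smul_eq_C_mul]; ring]
    simp [Polynomial.modByMonicHom, smul_modByMonic, mul_comm]
  constructor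
  · intro v hv
    have hM := main v hv
    have := Matrix.linearIndependent_rows_iff_isUnit.mpr hM
    convert this using 1
    funext i
    funext p
    exact hrel v i p
  · intro v hv w
    have hM := main v hv
    set M := (Matrix.of fun (i p : Fin n) =>
        ((X ^ (p : ℕ) * (∑ q : Fin n, Polynomial.C (v q) * X ^ (q : ℕ))) %ₘ f).coeff (i : ℕ)) with hMdef
    obtain ⟨a, ha⟩ := (Matrix.vecMul_surjective_iff_isUnit.mpr hM) w
    refine ⟨a, ?_⟩
    funext p
    rw [← ha]
    simp only [Matrix.vecMul, Matrix.mulVec, dotProduct, hMdef, Matrix.of_apply,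
      Finset.sum_apply, Matrix.sum_apply, Pi.smul_apply, Matrix.smul_apply, smul_eq_mul, Finset.sum_mul]
    rw [Finset.sum_comm]
    refine Finset.sum_congr rfl fun i _ => ?_
    rw [← hrel v i p]
    simp [Matrix.mulVec, dotProduct, Finset.mul_sum, mul_assoc]
end

section
/- Let ι be a finite index type, and for each i ∈ ι let R_i and S_i be finite index types, A_i : Matrix R_i S_i ℝ, b_i : R_i → ℝ, and x_i : S_i → ℝ be such that A_i · x_i = b_i and x_i has minimal ℓ¹-norm among all solutions, i.e., for every x' with A_i · x' = b_i one has ∑_s |x_i(s)| ≤ ∑_s |x'(s)|. Define A : Matrix (Π i, R_i) (Π i, S_i) ℝ by A(r, s) = ∏_i A_i(r(i), s(i)), b(r) = ∏_i b_i(r(i)), and x(s) = ∏_i x_i(s(i)). Then A · x = b, and for every x' : (Π i, S_i) → ℝ with A · x' = b, one has ∑_s |x(s)| ≤ ∑_s |x'(s)|; moreover ∑_s |x(s)| = ∏_i ∑_s |x_i(s)|. -/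
/-!
Minimising `‖x‖₁` subject to `A x = b` is a linear programme whose dual asks for `u` with
`|(uᵀA)_s| ≤ 1` for all `s`, maximising `⟨u, b⟩`; weak duality gives `⟨u, A y⟩ ≤ ‖y‖₁` for every `y`.
A minimal solution `x` has a dual certificate with `⟨u, A x⟩ = ‖x‖₁`: its class in `ℓ¹ ⧸ ker A` has
quotient norm `‖x‖₁`, so Hahn–Banach provides a norm-one functional vanishing on `ker A`, and such
a functional factors through `A`. Tensor products of the factors' certificates are certificates
for the Kronecker system, of value `∏ᵢ ‖xᵢ‖₁ = ‖⊗ᵢ xᵢ‖₁`.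
-/

open Matrix

theorem Submodule.Quotient.norm_mk_eq_of_norm_le_norm_add {𝕜 E : Type*} [Ring 𝕜]
    [SeminormedAddCommGroup E] [Module 𝕜 E] (K : Submodule 𝕜 E) {x : E}
    (hx : ∀ k ∈ K, ‖x‖ ≤ ‖x + k‖) : ‖(Submodule.Quotient.mk x : E ⧸ K)‖ = ‖x‖ := by
  refine le_antisymm (Submodule.Quotient.norm_mk_le K x) ?_
  refine (QuotientAddGroup.le_norm_iff (S := K.toAddSubgroup)).2 fun m hm => ?_
  have hmem : m - x ∈ K := (Submodule.Quotient.eq K).1 hm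
  simpa using hx _ hmem

theorem Submodule.exists_dual_vector_of_norm_le_norm_add {𝕜 E : Type*} [RCLike 𝕜]
    [SeminormedAddCommGroup E] [NormedSpace 𝕜 E] (K : Submodule 𝕜 E) {x : E}
    (hx : ∀ k ∈ K, ‖x‖ ≤ ‖x + k‖) :
    ∃ g : StrongDual 𝕜 E, ‖g‖ ≤ 1 ∧ (∀ k ∈ K, g k = 0) ∧ g x = ‖x‖ := by
  obtain ⟨g, hg, hgx⟩ := exists_dual_vector'' 𝕜 (K.mkQ x)
  refine ⟨g.comp K.mkQL, ?_, fun k hk => ?_, ?_⟩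
  · refine ContinuousLinearMap.opNorm_le_bound _ zero_le_one fun v => ?_
    calc ‖g (K.mkQ v)‖ ≤ ‖g‖ * ‖K.mkQ v‖ := g.le_opNorm _
      _ ≤ 1 * ‖v‖ := mul_le_mul hg (Submodule.Quotient.norm_mk_le K v) (norm_nonneg _) zero_le_one
  · simp [(Submodule.Quotient.mk_eq_zero K).2 hk]
  · rwa [Submodule.mkQ_apply, Submodule.Quotient.norm_mk_eq_of_norm_le_norm_add K hx] at hgx

theorem Matrix.exists_eq_dotProduct_mulVec_of_ker_le {K R S : Type*} [Field K] [Fintype R]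
    [Fintype S] {A : Matrix R S K} {ℓ : (S → K) →ₗ[K] K}
    (h : LinearMap.ker A.mulVecLin ≤ LinearMap.ker ℓ) :
    ∃ u : R → K, ∀ v, ℓ v = u ⬝ᵥ (A *ᵥ v) := by
  classical
  obtain ⟨φ, hφ⟩ : ℓ ∈ LinearMap.range A.mulVecLin.dualMap := by
    rw [LinearMap.range_dualMap_eq_dualAnnihilator_ker]
    exact (Submodule.mem_dualAnnihilator _).2 fun v hv => h hv
  refine ⟨fun r => φ (Pi.single r 1), fun v => ?_⟩
  rw [← hφ, LinearMap.dualMap_apply, LinearMap.pi_apply_eq_sum_univ]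
  refine Finset.sum_congr rfl fun r _ => ?_
  rw [smul_eq_mul, mul_comm]
  congr
  ext j
  simp [Pi.single_apply, eq_comm]

section L1Duality

variable {R S : Type*} [Fintype R] [Fintype S]

theorem Matrix.exists_dual_certificate_of_l1_minimal (A : Matrix R S ℝ) (x : S → ℝ)
    (hopt : ∀ v, A *ᵥ v = A *ᵥ x → ∑ s, |x s| ≤ ∑ s, |v s|) :
    ∃ u : R → ℝ, (∀ s, |(u ᵥ* A) s| ≤ 1) ∧ u ⬝ᵥ (A *ᵥ x) = ∑ s, |x s| := by
  classical
  let e := WithLp.linearEquiv 1 ℝ (S → ℝ)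
  have norm_toLp : ∀ v : S → ℝ, ‖WithLp.toLp 1 v‖ = ∑ s, |v s| := fun v => by
    simp [PiLp.norm_eq_of_L1]
  let K := LinearMap.ker (A.mulVecLin ∘ₗ e.toLinearMap)
  obtain ⟨g, hg, hgK, hgx⟩ :=
      K.exists_dual_vector_of_norm_le_norm_add (x := WithLp.toLp 1 x) fun k hk => by
        rw [norm_toLp, ← WithLp.toLp_ofLp (x := k), ← WithLp.toLp_add, norm_toLp]
        have hAk : A *ᵥ k.ofLp = 0 := hk
        exact hopt _ (by rw [mulVec_add, hAk, add_zero])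
  obtain ⟨u, hu⟩ := exists_eq_dotProduct_mulVec_of_ker_le (A := A)
    (ℓ := g.toLinearMap ∘ₗ e.symm.toLinearMap) fun v hv => hgK _ hv
  refine ⟨u, fun s => ?_, ?_⟩
  · have hs := hu (Pi.single s 1)
    rw [dotProduct_mulVec, dotProduct_single, mul_one] at hs
    calc |(u ᵥ* A) s| = ‖g (WithLp.toLp 1 (Pi.single s 1 : S → ℝ))‖ := by rw [← hs]; rfl
      _ ≤ 1 * ‖WithLp.toLp 1 (Pi.single s 1 : S → ℝ)‖ := g.le_of_opNorm_le hg _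
      _ = 1 := by simp
  · simpa [← hu, e, norm_toLp] using hgx

theorem Matrix.dotProduct_mulVec_le_sum_abs {A : Matrix R S ℝ} {u : R → ℝ}
    (hu : ∀ s, |(u ᵥ* A) s| ≤ 1) (y : S → ℝ) : u ⬝ᵥ (A *ᵥ y) ≤ ∑ s, |y s| := by
  rw [dotProduct_mulVec, dotProduct]
  refine Finset.sum_le_sum fun s _ => ?_
  calc (u ᵥ* A) s * y s ≤ |(u ᵥ* A) s| * |y s| := by rw [← abs_mul]; exact le_abs_self _
    _ ≤ |y s| := mul_le_of_le_one_left (abs_nonneg _) (hu s)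

end L1Duality

section PiTensor

variable {ι α : Type*} [Fintype ι] [CommSemiring α] {R S : ι → Type*}

def piTensor (x : ∀ i, S i → α) : (∀ i, S i) → α := fun s => ∏ i, x i (s i)

def Matrix.piKronecker (A : ∀ i, Matrix (R i) (S i) α) : Matrix (∀ i, R i) (∀ i, S i) α :=
  Matrix.of fun r s => ∏ i, A i (r i) (s i)

variable [DecidableEq ι]

theorem sum_piTensor [∀ i, Fintype (S i)] (x : ∀ i, S i → α) :
    ∑ s, piTensor x s = ∏ i, ∑ s, x i s :=
  (Fintype.prod_sum x).symm

theorem piTensor_dotProduct_piTensor [∀ i, Fintype (S i)] (x y : ∀ i, S i → α) :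
    piTensor x ⬝ᵥ piTensor y = ∏ i, x i ⬝ᵥ y i := by
  simp only [dotProduct, piTensor, ← Finset.prod_mul_distrib]
  exact sum_piTensor fun i s => x i s * y i s

theorem Matrix.piKronecker_mulVec_piTensor [∀ i, Fintype (S i)]
    (A : ∀ i, Matrix (R i) (S i) α) (x : ∀ i, S i → α) :
    piKronecker A *ᵥ piTensor x = piTensor fun i => A i *ᵥ x i :=
  funext fun r => piTensor_dotProduct_piTensor (fun i => A i (r i)) x

theorem Matrix.piTensor_vecMul_piKronecker [∀ i, Fintype (R i)]
    (A : ∀ i, Matrix (R i) (S i) α) (u : ∀ i, R i → α) :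
    piTensor u ᵥ* piKronecker A = piTensor fun i => u i ᵥ* A i :=
  funext fun s => piTensor_dotProduct_piTensor u (fun i r => A i r (s i))

end PiTensor

/-- Tensor products of ℓ¹-minimal solutions: if each `x_i` solves `A_i x_i = b_i` with
minimal ℓ¹-norm, then the Kronecker product vector `x(s) = ∏ᵢ x_i (s i)` solves
`A x = b` (where `A(r,s) = ∏ᵢ A_i (r i) (s i)` and `b(r) = ∏ᵢ b_i (r i)`) with minimal
ℓ¹-norm, and its ℓ¹-norm is the product `∏ᵢ ‖x_i‖₁`. -/
theorem kronecker_l1_minimal {ι : Type*} [Fintype ι] [DecidableEq ι]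
    {R S : ι → Type*} [∀ i, Fintype (R i)] [∀ i, Fintype (S i)]
    (A : ∀ i, Matrix (R i) (S i) ℝ) (b : ∀ i, R i → ℝ) (x : ∀ i, S i → ℝ)
    (hfeas : ∀ i, (A i) *ᵥ (x i) = b i)
    (hopt : ∀ i, ∀ x' : S i → ℝ, (A i) *ᵥ x' = b i → ∑ s, |x i s| ≤ ∑ s, |x' s|) :
    let A' : Matrix (∀ i, R i) (∀ i, S i) ℝ := Matrix.of fun r s => ∏ i, A i (r i) (s i)
    let b' : (∀ i, R i) → ℝ := fun r => ∏ i, b i (r i)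
    let x' : (∀ i, S i) → ℝ := fun s => ∏ i, x i (s i)
    A' *ᵥ x' = b' ∧
      (∀ y : (∀ i, S i) → ℝ, A' *ᵥ y = b' → ∑ s, |x' s| ≤ ∑ s, |y s|) ∧
      ∑ s, |x' s| = ∏ i, ∑ s, |x i s| := by
  show piKronecker A *ᵥ piTensor x = piTensor b ∧
    (∀ y, piKronecker A *ᵥ y = piTensor b → ∑ s, |piTensor x s| ≤ ∑ s, |y s|) ∧
    ∑ s, |piTensor x s| = ∏ i, ∑ s, |x i s|
  have hAx : piKronecker A *ᵥ piTensor x = piTensor b := by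
    rw [piKronecker_mulVec_piTensor, funext hfeas]
  have hnorm : ∑ s, |piTensor x s| = ∏ i, ∑ s, |x i s| := by
    simp only [piTensor, Finset.abs_prod]
    exact sum_piTensor fun i s => |x i s|
  choose u hu hux using fun i =>
    (A i).exists_dual_certificate_of_l1_minimal (x i) fun v hv => hopt i v (hv.trans (hfeas i))
  refine ⟨hAx, fun y hy => ?_, hnorm⟩
  have hU : ∀ s, |(piTensor u ᵥ* piKronecker A) s| ≤ 1 := fun s => by
    rw [piTensor_vecMul_piKronecker, piTensor, Finset.abs_prod]
    exact Finset.prod_le_one (fun i _ => abs_nonneg _) fun i _ => hu i (s i)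
  calc ∑ s, |piTensor x s| = piTensor u ⬝ᵥ (piKronecker A *ᵥ piTensor x) := by
        rw [hnorm, piKronecker_mulVec_piTensor, piTensor_dotProduct_piTensor]
        exact Finset.prod_congr rfl fun i _ => (hux i).symm
    _ = piTensor u ⬝ᵥ (piKronecker A *ᵥ y) := by rw [hAx, hy]
    _ ≤ ∑ s, |y s| := dotProduct_mulVec_le_sum_abs hU y
end

section
/- Let E be a real vector space, s : ι → E a finite family of vectors, T : E → ℝ a linear functional with T(s i) = 1 for all i, and ρ ∈ E with T(ρ) = 1. Then the infimum of {2p + 1 : p ≥ 0, ∃ σ₊, σ₋ in the convex hull of the range of s with ρ = (1+p) • σ₊ − p • σ₋} equals the infimum of {∑_i |x_i| : x : ι → ℝ, ρ = ∑_i x_i • s i}. (If one set is empty so is the other.) -/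
/-- Every element of the convex hull of the range of a finite family is a convex
combination of the family. -/
lemma exists_convex_repr {E : Type*} [AddCommGroup E] [Module ℝ E]
    {ι : Type*} [Fintype ι] (s : ι → E) {σ : E}
    (h : σ ∈ convexHull ℝ (Set.range s)) :
    ∃ c : ι → ℝ, (∀ i, 0 ≤ c i) ∧ ∑ i, c i = 1 ∧ σ = ∑ i, c i • s i := by
  classical
  have : convexHull ℝ (Set.range s) ⊆
      {σ : E | ∃ c : ι → ℝ, (∀ i, 0 ≤ c i) ∧ ∑ i, c i = 1 ∧ σ = ∑ i, c i • s i} := by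
    apply convexHull_min
    · rintro _ ⟨i, rfl⟩
      refine ⟨fun j => if j = i then 1 else 0, fun j => by dsimp only; split <;> norm_num, by simp, by simp⟩
    · rintro x ⟨c, hc, hcs, rfl⟩ y ⟨d, hd, hds, rfl⟩ a b ha hb hab
      refine ⟨fun i => a * c i + b * d i, fun i => add_nonneg (mul_nonneg ha (hc i)) (mul_nonneg hb (hd i)), ?_, ?_⟩
      · simp [Finset.sum_add_distrib, ← Finset.mul_sum, hcs, hds, hab]
      · simp only [Finset.smul_sum, add_smul, mul_smul, Finset.sum_add_distrib]
  exact this h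

/-- Equivalence of the two definitions of Robustness of Magic: for a finite family
`s : ι → E` of "free states" normalized by a linear functional `T` (`T (s i) = 1`) and a
state `ρ` with `T ρ = 1`, the infimum of `2p + 1` over decompositions
`ρ = (1+p) σ₊ − p σ₋` with `σ± ∈ convexHull (range s)`, `p ≥ 0`, equals the infimum of
`∑ᵢ |x_i|` over decompositions `ρ = ∑ᵢ x_i s_i`. (If one set is empty so is the other.) -/
theorem robustness_eq_l1_min {E : Type*} [AddCommGroup E] [Module ℝ E]
    {ι : Type*} [Fintype ι] (s : ι → E) (T : E →ₗ[ℝ] ℝ)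
    (hT : ∀ i, T (s i) = 1) (ρ : E) (hρ : T ρ = 1) :
    sInf {r : ℝ | ∃ p : ℝ, 0 ≤ p ∧ r = 2 * p + 1 ∧
        ∃ σp ∈ convexHull ℝ (Set.range s), ∃ σm ∈ convexHull ℝ (Set.range s),
          ρ = (1 + p) • σp - p • σm} =
      sInf {r : ℝ | ∃ x : ι → ℝ, ρ = ∑ i, x i • s i ∧ r = ∑ i, |x i|} := by
  set A := {r : ℝ | ∃ p : ℝ, 0 ≤ p ∧ r = 2 * p + 1 ∧
      ∃ σp ∈ convexHull ℝ (Set.range s), ∃ σm ∈ convexHull ℝ (Set.range s),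
        ρ = (1 + p) • σp - p • σm} with hA
  set B := {r : ℝ | ∃ x : ι → ℝ, ρ = ∑ i, x i • s i ∧ r = ∑ i, |x i|} with hB
  -- If ρ = ∑ x i • s i, then ∑ x i = 1
  have hsum : ∀ x : ι → ℝ, ρ = ∑ i, x i • s i → ∑ i, x i = 1 := by
    intro x hx
    have := congrArg T hx
    simpa [hρ, map_sum, hT] using this.symm
  -- B ⊆ A
  have hBA : B ⊆ A := by
    rintro r ⟨x, hx, rfl⟩
    have hx1 : ∑ i, x i = 1 := hsum x hx
    set a : ι → ℝ := fun i => (|x i| + x i) / 2 with ha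
    set b : ι → ℝ := fun i => (|x i| - x i) / 2 with hb
    have ha0 : ∀ i, 0 ≤ a i := fun i => by
      have := neg_abs_le (x i); simp only [ha]; linarith
    have hb0 : ∀ i, 0 ≤ b i := fun i => by
      have := le_abs_self (x i); simp only [hb]; linarith
    set p : ℝ := (∑ i, |x i| - 1) / 2 with hp
    have hP : ∑ i, a i = 1 + p := by
      simp only [ha, hp, ← Finset.sum_div, Finset.sum_add_distrib, hx1]
      ring
    have hN : ∑ i, b i = p := by
      simp only [hb, hp, ← Finset.sum_div, Finset.sum_sub_distrib, hx1]
    have hp0 : 0 ≤ p := by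
      have : ∑ i, x i ≤ ∑ i, |x i| := Finset.sum_le_sum fun i _ => le_abs_self (x i)
      rw [hx1] at this; simp only [hp]; linarith
    have hPpos : (0:ℝ) < ∑ i, a i := by rw [hP]; linarith
    have hσp : (∑ i, a i)⁻¹ • ∑ i, a i • s i ∈ convexHull ℝ (Set.range s) := by
      have := Finset.centerMass_mem_convexHull (Finset.univ) (fun i _ => ha0 i)
        hPpos (fun i _ => Set.mem_range_self (f := s) i)
      simpa [Finset.centerMass] using this
    refine ⟨p, hp0, by simp [hp]; ring, (∑ i, a i)⁻¹ • ∑ i, a i • s i, hσp, ?_⟩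
    have hkey : (1 + p) • ((∑ i, a i)⁻¹ • ∑ i, a i • s i) = ∑ i, a i • s i := by
      rw [← hP, smul_inv_smul₀ (ne_of_gt hPpos)]
    by_cases hN0 : p = 0
    · refine ⟨(∑ i, a i)⁻¹ • ∑ i, a i • s i, hσp, ?_⟩
      have hb_zero : ∀ i, b i = 0 := by
        intro i
        have := (Finset.sum_eq_zero_iff_of_nonneg (fun i _ => hb0 i)).mp
          (by rw [hN, hN0]) i (Finset.mem_univ i)
        exact this
      have hxa : ∀ i, x i = a i := fun i => by
        have := hb_zero i; simp only [hb, ha] at *; linarith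
      rw [hN0] at hkey ⊢
      simp only [add_zero, one_smul] at hkey
      simp only [zero_smul, sub_zero, add_zero, one_smul]
      rw [hkey, hx]
      exact Finset.sum_congr rfl fun i _ => by rw [hxa i]
    · have hNpos : (0:ℝ) < ∑ i, b i := by
        rw [hN]; exact lt_of_le_of_ne hp0 (Ne.symm hN0)
      have hσm : (∑ i, b i)⁻¹ • ∑ i, b i • s i ∈ convexHull ℝ (Set.range s) := by
        have := Finset.centerMass_mem_convexHull (Finset.univ) (fun i _ => hb0 i)
          hNpos (fun i _ => Set.mem_range_self (f := s) i)
        simpa [Finset.centerMass] using this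
      refine ⟨(∑ i, b i)⁻¹ • ∑ i, b i • s i, hσm, ?_⟩
      have hkey2 : p • ((∑ i, b i)⁻¹ • ∑ i, b i • s i) = ∑ i, b i • s i := by
        rw [← hN, smul_inv_smul₀ (ne_of_gt hNpos)]
      rw [hkey, hkey2, hx, ← Finset.sum_sub_distrib]
      refine Finset.sum_congr rfl fun i _ => ?_
      rw [← sub_smul]
      congr 1
      simp only [ha, hb]; ring
  -- For each r ∈ A there is r' ∈ B with r' ≤ r
  have hAB : ∀ r ∈ A, ∃ r' ∈ B, r' ≤ r := by
    rintro r ⟨p, hp0, rfl, σp, hσp, σm, hσm, hdecomp⟩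
    obtain ⟨c, hc0, hc1, rfl⟩ := exists_convex_repr s hσp
    obtain ⟨d, hd0, hd1, rfl⟩ := exists_convex_repr s hσm
    set x : ι → ℝ := fun i => (1 + p) * c i - p * d i with hx
    have hρx : ρ = ∑ i, x i • s i := by
      rw [hdecomp, Finset.smul_sum, Finset.smul_sum, ← Finset.sum_sub_distrib]
      refine Finset.sum_congr rfl fun i _ => ?_
      simp only [hx, smul_smul, sub_smul]
    refine ⟨∑ i, |x i|, ⟨x, hρx, rfl⟩, ?_⟩
    calc ∑ i, |x i| ≤ ∑ i, ((1 + p) * c i + p * d i) := by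
          refine Finset.sum_le_sum fun i _ => ?_
          simp only [hx]
          have h1 : (0:ℝ) ≤ (1 + p) * c i := mul_nonneg (by linarith) (hc0 i)
          have h2 : (0:ℝ) ≤ p * d i := mul_nonneg hp0 (hd0 i)
          rw [abs_sub_le_iff]
          constructor <;> linarith
      _ = 2 * p + 1 := by
          rw [Finset.sum_add_distrib, ← Finset.mul_sum, ← Finset.mul_sum, hc1, hd1]
          ring
  -- bounded below
  have hAbdd : BddBelow A := ⟨1, by rintro r ⟨p, hp0, rfl, _⟩; linarith⟩
  have hBbdd : BddBelow B := ⟨0, by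
    rintro r ⟨x, hx, rfl⟩
    exact Finset.sum_nonneg fun i _ => abs_nonneg _⟩
  rcases Set.eq_empty_or_nonempty A with hAe | hAne
  · have hBe : B = ∅ := Set.eq_empty_of_subset_empty (hAe ▸ hBA)
    rw [hAe, hBe]
  · obtain ⟨r, hr⟩ := hAne
    obtain ⟨r', hr'B, hr'le⟩ := hAB r hr
    refine le_antisymm ?_ ?_
    · exact csInf_le_csInf hAbdd ⟨r', hr'B⟩ hBA
    · refine le_csInf ⟨r, hr⟩ fun a ha => ?_
      obtain ⟨b, hbB, hba⟩ := hAB a ha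
      exact (csInf_le hBbdd hbB).trans hba
end

section
/- Let 0 ≤ k ≤ n, let X̂ ∈ (ZMod 2)^{k×(n−k)} be arbitrary and Ẑ ∈ (ZMod 2)^{k×k} be symmetric (Ẑᵀ = Ẑ). Define the n × 2n block matrix over ZMod 2 by C = [[I_k, X̂, Ẑ, 0], [0, 0, X̂ᵀ, I_{n−k}]] (first block row has k rows, second has n−k rows; the left n columns form the X-part and the right n columns the Z-part). Then the rows of C are linearly independent, and C · Ω · Cᵀ = 0, where Ω = [[0, I_n], [I_n, 0]] is the 2n × 2n symplectic form matrix. Moreover, distinct choices of (k, X̂, Ẑ) with X̂ in reduced row echelon form of rank k yield check matrices with distinct row spaces. -/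
/-!
On its pivot columns (the first `k` X-columns and the last `n - k` Z-columns) the check matrix
is the identity. This gives linear independence of the rows, and it also shows that two check
matrices with the same pivots whose row spaces are nested must be equal. The number `k` is read
off the row space as the dimension of its projection to the X-part, whose rows are
`[[I_k, X̂], [0, 0]]`; once `k` agrees, the pivots agree and `(X̂, Ẑ)` is recovered.
Isotropy is the block identity `C Ω Cᵀ = A Bᵀ + (A Bᵀ)ᵀ` for `C = [A | B]`, which vanishes
modulo 2 because `A Bᵀ = [[Ẑᵀ, 2 X̂], [0, 0]]` is symmetric.
-/

open Matrix

/-- The standard-form check matrix `C = [[I_k, X̂, Ẑ, 0], [0, 0, X̂ᵀ, I_{n-k}]]`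
(an `n × 2n` matrix over `F_2`, the left `n` columns being the X-part and the right `n`
columns the Z-part). -/
def stdCheckMatrix (n k : ℕ) (hk : k ≤ n)
    (X : Matrix (Fin k) (Fin (n - k)) (ZMod 2)) (Z : Matrix (Fin k) (Fin k) (ZMod 2)) :
    Matrix (Fin k ⊕ Fin (n - k)) (Fin n ⊕ Fin n) (ZMod 2) :=
  Matrix.of fun r c =>
    Sum.elim
      (fun j : Fin n =>
        (Matrix.fromBlocks 1 X 0 0 :
            Matrix (Fin k ⊕ Fin (n - k)) (Fin k ⊕ Fin (n - k)) (ZMod 2)) r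
          (finSumFinEquiv.symm (Fin.cast (by omega) j)))
      (fun j : Fin n =>
        (Matrix.fromBlocks Z 0 Xᵀ 1 :
            Matrix (Fin k ⊕ Fin (n - k)) (Fin k ⊕ Fin (n - k)) (ZMod 2)) r
          (finSumFinEquiv.symm (Fin.cast (by omega) j)))
      c

namespace Matrix

section Pivot

variable {R ι κ : Type*} [CommSemiring R] [Fintype ι] [DecidableEq ι] {M M' : Matrix ι κ R}
  {p : ι → κ}

theorem linearIndependent_row_of_submatrix_eq_one (h : M.submatrix id p = 1) :
    LinearIndependent R M.row := by
  refine LinearIndependent.of_comp (LinearMap.funLeft R R p) ?_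
  convert (Pi.basisFun R ι).linearIndependent using 1
  ext i j
  simpa [one_eq_pi_single] using congrFun₂ h i j

theorem eq_of_row_mem_span_of_submatrix_eq_one (hM : M.submatrix id p = 1)
    (hM' : M'.submatrix id p = 1) (h : ∀ i, M' i ∈ Submodule.span R (Set.range M.row)) :
    M' = M := by
  simp_rw [← range_vecMulLinear, LinearMap.mem_range] at h
  choose c hc using h
  have hM'_eq : M' = of c * M := by
    ext i j
    rw [mul_apply_eq_vecMul, ← hc]
    rfl
  have hc_one : of c = 1 := by
    rw [← hM', hM'_eq, ← submatrix_id_id (of c),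
      submatrix_mul _ _ _ _ _ Function.bijective_id, hM]
    simp
  rw [hM'_eq, hc_one, Matrix.one_mul]

end Pivot

theorem fromCols_mul_fromBlocks_zero_one_one_zero_mul_transpose {R m n : Type*}
    [CommSemiring R] [Fintype n] [DecidableEq n] (P Q : Matrix m n R) :
    fromCols P Q * (fromBlocks 0 1 1 0 : Matrix (n ⊕ n) (n ⊕ n) R) * (fromCols P Q)ᵀ =
      P * Qᵀ + Q * Pᵀ := by
  rw [transpose_fromCols, fromCols_mul_fromBlocks, fromCols_mul_fromRows]
  simp [add_comm]

theorem rank_fromBlocks_one_zero_zero {R m n o : Type*} [Field R] [Fintype m] [DecidableEq m]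
    [Fintype n] [Fintype o] (X : Matrix m n R) :
    (fromBlocks 1 X 0 0 : Matrix (m ⊕ o) (m ⊕ n) R).rank = Fintype.card m := by
  apply le_antisymm
  · have : (fromBlocks 1 X 0 0 : Matrix (m ⊕ o) (m ⊕ n) R) =
        fromRows (1 : Matrix m m R) (0 : Matrix o m R) * fromCols 1 X := by
      rw [fromRows_mul_fromCols, Matrix.one_mul, Matrix.one_mul, Matrix.zero_mul, Matrix.zero_mul]
    rw [this]
    exact (rank_mul_le_left _ _).trans (rank_le_card_width _)
  · have := rank_submatrix_le (fromBlocks 1 X 0 0 : Matrix (m ⊕ o) (m ⊕ n) R) Sum.inl Sum.inl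
    rwa [show (fromBlocks 1 X 0 0 : Matrix (m ⊕ o) (m ⊕ n) R).submatrix Sum.inl Sum.inl = 1 from
      rfl, rank_one] at this

end Matrix

section StdCheckMatrix

variable {n k : ℕ} (hk : k ≤ n) (X : Matrix (Fin k) (Fin (n - k)) (ZMod 2))
  (Z : Matrix (Fin k) (Fin k) (ZMod 2))

def stdColEquiv : Fin n ≃ Fin k ⊕ Fin (n - k) :=
  (finCongr (by omega)).trans finSumFinEquiv.symm

theorem stdCheckMatrix_eq_fromCols :
    stdCheckMatrix n k hk X Z =
      fromCols ((fromBlocks 1 X 0 0 : Matrix _ (Fin k ⊕ Fin (n - k)) _).submatrix id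
          (stdColEquiv hk))
        ((fromBlocks Z 0 Xᵀ 1 : Matrix _ (Fin k ⊕ Fin (n - k)) _).submatrix id
          (stdColEquiv hk)) := by
  ext r (j | j) <;> rfl

def stdPivot : Fin k ⊕ Fin (n - k) → Fin n ⊕ Fin n :=
  Sum.map ((stdColEquiv hk).symm ∘ Sum.inl) ((stdColEquiv hk).symm ∘ Sum.inr)

theorem stdCheckMatrix_submatrix_stdPivot :
    (stdCheckMatrix n k hk X Z).submatrix id (stdPivot hk) = 1 := by
  ext (r | r) (i | i) <;> simp [stdCheckMatrix_eq_fromCols, stdPivot, one_apply]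

theorem stdCheckMatrix_mul_fromBlocks_mul_transpose_eq_zero (hZ : Zᵀ = Z) :
    stdCheckMatrix n k hk X Z *
        (fromBlocks 0 1 1 0 : Matrix (Fin n ⊕ Fin n) (Fin n ⊕ Fin n) (ZMod 2)) *
        (stdCheckMatrix n k hk X Z)ᵀ = 0 := by
  rw [stdCheckMatrix_eq_fromCols, fromCols_mul_fromBlocks_zero_one_one_zero_mul_transpose,
    transpose_submatrix, transpose_submatrix, submatrix_mul_equiv, submatrix_mul_equiv,
    submatrix_id_id, submatrix_id_id, fromBlocks_transpose, fromBlocks_transpose,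
    fromBlocks_multiply, fromBlocks_multiply]
  ext (i | i) (j | j) <;> simp [hZ, CharTwo.add_self_eq_zero]

theorem finrank_map_funLeft_inl_span_stdCheckMatrix :
    Module.finrank (ZMod 2) ((Submodule.span (ZMod 2)
      (Set.range fun r => stdCheckMatrix n k hk X Z r)).map
        (LinearMap.funLeft (ZMod 2) (ZMod 2) Sum.inl)) = k := by
  have hX : LinearMap.funLeft (ZMod 2) (ZMod 2) Sum.inl ∘
      (fun r => stdCheckMatrix n k hk X Z r) =
      ((fromBlocks 1 X 0 0 : Matrix (Fin k ⊕ Fin (n - k)) _ _).submatrix (Equiv.refl _)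
        (stdColEquiv hk)).row := rfl
  rw [Submodule.map_span, ← Set.range_comp, hX, ← rank_eq_finrank_span_row, rank_submatrix,
    rank_fromBlocks_one_zero_zero, Fintype.card_fin]

theorem stdCheckMatrix_injective2 : Function.Injective2 (stdCheckMatrix n k hk) := by
  intro X Z X' Z' h
  rw [stdCheckMatrix_eq_fromCols, stdCheckMatrix_eq_fromCols] at h
  obtain ⟨hA, hB⟩ := fromCols_inj h
  have hA' := congrArg (·.submatrix id (stdColEquiv hk).symm) hA
  have hB' := congrArg (·.submatrix id (stdColEquiv hk).symm) hB
  simp only [submatrix_submatrix, Function.comp_id, Equiv.self_comp_symm, submatrix_id_id]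
    at hA' hB'
  exact ⟨(fromBlocks_inj.mp hA').2.1, (fromBlocks_inj.mp hB').1⟩

end StdCheckMatrix

theorem stdCheckMatrix_independent_isotropic_inj_general (n k k' : ℕ) (hk : k ≤ n) (hk' : k' ≤ n)
    (X : Matrix (Fin k) (Fin (n - k)) (ZMod 2)) (Z : Matrix (Fin k) (Fin k) (ZMod 2))
    (X' : Matrix (Fin k') (Fin (n - k')) (ZMod 2)) (Z' : Matrix (Fin k') (Fin k') (ZMod 2))
    (hZ : Zᵀ = Z) :
    LinearIndependent (ZMod 2) (fun r => stdCheckMatrix n k hk X Z r) ∧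
    stdCheckMatrix n k hk X Z *
        (Matrix.fromBlocks 0 1 1 0 : Matrix (Fin n ⊕ Fin n) (Fin n ⊕ Fin n) (ZMod 2)) *
        (stdCheckMatrix n k hk X Z)ᵀ = 0 ∧
    (Submodule.span (ZMod 2) (Set.range fun r => stdCheckMatrix n k hk X Z r) =
        Submodule.span (ZMod 2) (Set.range fun r => stdCheckMatrix n k' hk' X' Z' r) →
      (⟨k, X, Z⟩ : Σ k : ℕ,
          Matrix (Fin k) (Fin (n - k)) (ZMod 2) × Matrix (Fin k) (Fin k) (ZMod 2)) =
        ⟨k', X', Z'⟩) := by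
  refine ⟨linearIndependent_row_of_submatrix_eq_one (stdCheckMatrix_submatrix_stdPivot hk X Z),
    stdCheckMatrix_mul_fromBlocks_mul_transpose_eq_zero hk X Z hZ, fun h => ?_⟩
  obtain rfl : k = k' := by
    rw [← finrank_map_funLeft_inl_span_stdCheckMatrix hk X Z, h,
      finrank_map_funLeft_inl_span_stdCheckMatrix hk' X' Z']
  have hrows : ∀ r, stdCheckMatrix n k hk X' Z' r ∈
      Submodule.span (ZMod 2) (Set.range (stdCheckMatrix n k hk X Z).row) :=
    fun r => h ▸ Submodule.subset_span ⟨r, rfl⟩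
  obtain ⟨rfl, rfl⟩ := stdCheckMatrix_injective2 hk
    (eq_of_row_mem_span_of_submatrix_eq_one (stdCheckMatrix_submatrix_stdPivot hk X Z)
      (stdCheckMatrix_submatrix_stdPivot hk X' Z') hrows).symm
  rfl

/-- For `Ẑ` symmetric, the rows of the standard-form check matrix are linearly
independent and `C Ω Cᵀ = 0` for the symplectic form matrix `Ω = [[0, I_n], [I_n, 0]]`;
moreover distinct choices of `(k, X̂, Ẑ)` yield check matrices with distinct row
spaces. -/
theorem stdCheckMatrix_independent_isotropic_inj (n k k' : ℕ) (hk : k ≤ n) (hk' : k' ≤ n)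
    (X : Matrix (Fin k) (Fin (n - k)) (ZMod 2)) (Z : Matrix (Fin k) (Fin k) (ZMod 2))
    (X' : Matrix (Fin k') (Fin (n - k')) (ZMod 2)) (Z' : Matrix (Fin k') (Fin k') (ZMod 2))
    (hZ : Zᵀ = Z) (hZ' : Z'ᵀ = Z') :
    LinearIndependent (ZMod 2) (fun r => stdCheckMatrix n k hk X Z r) ∧
    stdCheckMatrix n k hk X Z *
        (Matrix.fromBlocks 0 1 1 0 : Matrix (Fin n ⊕ Fin n) (Fin n ⊕ Fin n) (ZMod 2)) *
        (stdCheckMatrix n k hk X Z)ᵀ = 0 ∧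
    (Submodule.span (ZMod 2) (Set.range fun r => stdCheckMatrix n k hk X Z r) =
        Submodule.span (ZMod 2) (Set.range fun r => stdCheckMatrix n k' hk' X' Z' r) →
      (⟨k, X, Z⟩ : Σ k : ℕ,
          Matrix (Fin k) (Fin (n - k)) (ZMod 2) × Matrix (Fin k) (Fin k) (ZMod 2)) =
        ⟨k', X', Z'⟩) :=
  stdCheckMatrix_independent_isotropic_inj_general n k k' hk hk' X Z X' Z' hZ
end

section
/- The set of non-identity n-qubit Pauli operators {P_s : s : Fin n → Fin 4, s ≠ (fun _ => 0)}, which has 4^n − 1 elements, can be partitioned into 2^n + 1 subsets, each of size 2^n − 1, such that any two Pauli operators lying in the same subset commute: there exists a partition of the index set {s : Fin n → Fin 4 | s ≠ const 0} into 2^n + 1 blocks of cardinality 2^n − 1 with P_s · P_t = P_t · P_s whenever s and t belong to the same block. -/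
open Matrix

/-- The single-qubit Pauli matrices `I, X, Y, Z`. -/
noncomputable def pauli : Fin 4 → Matrix (Fin 2) (Fin 2) ℂ :=
  ![1, !![0, 1; 1, 0], !![0, -Complex.I; Complex.I, 0], !![1, 0; 0, -1]]

/-- The `n`-qubit Pauli operator `P_s = ⊗ᵢ σ_{s i}`. -/
noncomputable def PauliOp (n : ℕ) (s : Fin n → Fin 4) :
    Matrix (Fin n → Fin 2) (Fin n → Fin 2) ℂ :=
  Matrix.of fun a b => ∏ i, pauli (s i) (a i) (b i)

/-!
Up to phase each Pauli matrix is `X^a Z^b` with `(a, b) ∈ 𝔽₂²`, so `P_s` corresponds to a vector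
`(a, b) ∈ 𝔽₂ⁿ × 𝔽₂ⁿ`, and `P_s`, `P_t` commute when the symplectic form `a ⬝ b' + a' ⬝ b`
vanishes. Identify `𝔽₂ⁿ × 𝔽₂ⁿ` with `F × F`, `F = 𝔽_{2ⁿ}`, using a basis of `F` on the first factor
and its trace-dual basis on the second: the symplectic form becomes `Tr (x y' + x' y)`. For two
points of the same `F`-line through the origin this is `Tr (2 c x y) = 0`, so the `2ⁿ + 1` points
of `ℙ¹(F)` give blocks of `2ⁿ - 1` pairwise commuting Pauli operators.
-/

open Module
open scoped LinearAlgebra.Projectivization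

namespace Matrix

variable {ι l m p R : Type*} [Fintype ι] [CommRing R]

def piKronecker_s17 (M : ι → Matrix l m R) : Matrix (ι → l) (ι → m) R :=
  of fun a b => ∏ i, M i (a i) (b i)

theorem piKronecker_mul [DecidableEq ι] [Fintype m] (M : ι → Matrix l m R)
    (N : ι → Matrix m p R) :
    piKronecker_s17 M * piKronecker_s17 N = piKronecker_s17 fun i => M i * N i := by
  ext a c
  simp only [piKronecker_s17, mul_apply, of_apply, Fintype.prod_sum, Finset.prod_mul_distrib]

theorem piKronecker_mul_comm_of_mul_eq_smul [DecidableEq ι] [Fintype m] (M N : ι → Matrix m m R)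
    (c : ι → R) (hc : ∏ i, c i = 1) (h : ∀ i, M i * N i = c i • (N i * M i)) :
    piKronecker_s17 M * piKronecker_s17 N = piKronecker_s17 N * piKronecker_s17 M := by
  rw [piKronecker_mul, piKronecker_mul]
  ext a b
  simp only [h, piKronecker_s17, of_apply, smul_apply, smul_eq_mul,
    Finset.prod_mul_distrib, hc, one_mul]

end Matrix

theorem ZMod.prod_neg_one_pow_val_eq_one {ι R : Type*} [Fintype ι] [CommMonoid R]
    [HasDistribNeg R] {x : ι → ZMod 2} (h : ∑ i, x i = 0) : ∏ i, (-1 : R) ^ (x i).val = 1 := by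
  rw [Finset.prod_pow_eq_pow_sum]
  refine Even.neg_one_pow (even_iff_two_dvd.2 ?_)
  rw [← ZMod.natCast_eq_zero_iff, Nat.cast_sum]
  simpa only [ZMod.natCast_val, ZMod.cast_id', id] using h

/-- `I, X, Y, Z ↦ (0,0), (1,0), (1,1), (0,1)`: the exponents `(a, b)` with `σ ∝ X^a Z^b`. -/
noncomputable def pauliBits : Fin 4 ≃ ZMod 2 × ZMod 2 :=
  Equiv.ofBijective ![(0, 0), (1, 0), (1, 1), (0, 1)] (by decide)

theorem pauli_mul_pauli (p q : Fin 4) :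
    pauli p * pauli q =
      (-1 : ℂ) ^ ((pauliBits p).1 * (pauliBits q).2 + (pauliBits q).1 * (pauliBits p).2).val •
        (pauli q * pauli p) := by
  fin_cases p <;> fin_cases q <;>
    simp [pauli, pauliBits, one_fin_two, ZMod.val_one, CharTwo.add_self_eq_zero]

noncomputable def pauliSymplecticEquiv (n : ℕ) :
    (Fin n → Fin 4) ≃ (Fin n → ZMod 2) × (Fin n → ZMod 2) :=
  (Equiv.piCongrRight fun _ => pauliBits).trans (Equiv.arrowProdEquivProdArrow _ _ _)

theorem pauliSymplecticEquiv_eq_zero_iff {n : ℕ} (s : Fin n → Fin 4) :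
    pauliSymplecticEquiv n s = 0 ↔ s = fun _ => 0 :=
  (pauliSymplecticEquiv n).injective.eq_iff' rfl

theorem pauliOp_eq_piKronecker (n : ℕ) (s : Fin n → Fin 4) :
    PauliOp n s = piKronecker_s17 fun i => pauli (s i) :=
  rfl

theorem pauliOp_mul_comm_of_symplectic_eq_zero {n : ℕ} (s t : Fin n → Fin 4)
    (h : (pauliSymplecticEquiv n s).1 ⬝ᵥ (pauliSymplecticEquiv n t).2 +
      (pauliSymplecticEquiv n t).1 ⬝ᵥ (pauliSymplecticEquiv n s).2 = 0) :
    PauliOp n s * PauliOp n t = PauliOp n t * PauliOp n s := by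
  rw [pauliOp_eq_piKronecker, pauliOp_eq_piKronecker]
  refine piKronecker_mul_comm_of_mul_eq_smul (fun i => pauli (s i)) (fun i => pauli (t i)) _
    (ZMod.prod_neg_one_pow_val_eq_one ?_) fun i => pauli_mul_pauli (s i) (t i)
  simpa [dotProduct, Finset.sum_add_distrib, pauliSymplecticEquiv] using h

namespace Module.Basis

variable {K L ι : Type*} [Field K] [Field L] [Algebra K L] [FiniteDimensional K L]
  [Algebra.IsSeparable K L] [Fintype ι] [DecidableEq ι] (b : Basis ι K L)

theorem trace_mul_eq_dotProduct (x y : L) :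
    Algebra.trace K L (x * y) = b.equivFun x ⬝ᵥ b.traceDual.equivFun y := by
  simp only [dotProduct, equivFun_apply, traceDual_repr_apply, Algebra.traceForm_apply]
  conv_lhs => rw [← b.sum_repr x]
  simp only [Finset.sum_mul, map_sum, smul_mul_assoc, map_smul, smul_eq_mul, mul_comm y]

end Module.Basis

namespace Projectivization

theorem card_fiber_mk (k V : Type*) [DivisionRing k] [AddCommGroup V] [Module k V]
    (p : ℙ k V) :
    Nat.card {v : {v : V // v ≠ 0} // mk k v.1 v.2 = p} = Nat.card kˣ :=
  Nat.card_congr <| ((nonZeroEquivProjectivizationProdUnits k V).subtypeEquiv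
    (q := fun x => x.1 = p) fun _ => Iff.rfl).trans <|
    Equiv.prodSubtypeFstEquivSubtypeProd.trans (Equiv.uniqueProd kˣ {q // q = p})

theorem fst_mul_snd_add_fst_mul_snd_eq_zero {F : Type*} [Field F] [CharP F 2] {v w : F × F}
    (hv : v ≠ 0) (hw : w ≠ 0) (h : mk F v hv = mk F w hw) : v.1 * w.2 + w.1 * v.2 = 0 := by
  obtain ⟨a, rfl⟩ := (mk_eq_mk_iff' F v w hv hw).1 h
  simp only [Prod.smul_fst, Prod.smul_snd, smul_eq_mul]
  rw [show a * w.1 * w.2 + w.1 * (a * w.2) = a * w.1 * w.2 + a * w.1 * w.2 by ring]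
  exact CharTwo.add_self_eq_zero _

end Projectivization

theorem Module.Basis.natCard_eq_two_pow {n : ℕ} {F : Type*} [AddCommGroup F] [Module (ZMod 2) F]
    (b : Basis (Fin n) (ZMod 2) F) : Nat.card F = 2 ^ n := by
  rw [Nat.card_congr b.equivFun.toEquiv, Nat.card_fun, Nat.card_zmod, Nat.card_fin]

section PauliLines

variable {n : ℕ} {F : Type*} [Field F] [Finite F] [Algebra (ZMod 2) F]
  (b : Basis (Fin n) (ZMod 2) F)

noncomputable def pauliCoords : (Fin n → Fin 4) ≃ F × F :=
  (pauliSymplecticEquiv n).trans (b.equivFun.prodCongr b.traceDual.equivFun).symm.toEquiv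

theorem pauliCoords_eq_zero_iff (s : Fin n → Fin 4) : pauliCoords b s = 0 ↔ s = fun _ => 0 := by
  rw [← pauliSymplecticEquiv_eq_zero_iff]
  exact (b.equivFun.prodCongr b.traceDual.equivFun).symm.map_eq_zero_iff

noncomputable def pauliLine (s : {s : Fin n → Fin 4 // s ≠ fun _ => 0}) : ℙ F (F × F) :=
  .mk F (pauliCoords b s) ((pauliCoords_eq_zero_iff b s).not.2 s.2)

theorem pauliOp_mul_comm_of_pauliLine_eq [CharP F 2]
    {s t : {s : Fin n → Fin 4 // s ≠ fun _ => 0}} (h : pauliLine b s = pauliLine b t) :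
    PauliOp n s * PauliOp n t = PauliOp n t * PauliOp n s := by
  apply pauliOp_mul_comm_of_symplectic_eq_zero
  have := congrArg (Algebra.trace (ZMod 2) F)
    (Projectivization.fst_mul_snd_add_fst_mul_snd_eq_zero _ _ h)
  rw [map_add, b.trace_mul_eq_dotProduct, b.trace_mul_eq_dotProduct, map_zero] at this
  simpa only [pauliCoords, Equiv.trans_apply, LinearEquiv.coe_toEquiv, LinearEquiv.prodCongr_symm,
    LinearEquiv.prodCongr_apply, LinearEquiv.apply_symm_apply] using this

theorem card_pauliLine_fiber (p : ℙ F (F × F)) :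
    Nat.card {s // pauliLine b s = p} = 2 ^ n - 1 := by
  rw [← b.natCard_eq_two_pow, ← Nat.card_units, ← Projectivization.card_fiber_mk F (F × F) p]
  exact Nat.card_congr <|
    ((pauliCoords b).subtypeEquiv fun s => (pauliCoords_eq_zero_iff b s).not.symm).subtypeEquiv
      fun _ => Iff.rfl

end PauliLines

/-- Partition of the `4^n − 1` non-identity `n`-qubit Pauli operators into `2^n + 1`
blocks of size `2^n − 1` such that any two Pauli operators in the same block commute. -/
theorem exists_commuting_partition_of_paulis (n : ℕ) :
    ∃ f : {s : Fin n → Fin 4 // s ≠ fun _ => 0} → Fin (2 ^ n + 1),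
      (∀ i : Fin (2 ^ n + 1),
        (Finset.univ.filter fun s => f s = i).card = 2 ^ n - 1) ∧
      (∀ s t, f s = f t →
        PauliOp n s.1 * PauliOp n t.1 = PauliOp n t.1 * PauliOp n s.1) := by
  rcases eq_or_ne n 0 with rfl | hn
  · have : IsEmpty {s : Fin 0 → Fin 4 // s ≠ fun _ => 0} := ⟨fun s => s.2 (Subsingleton.elim _ _)⟩
    exact ⟨fun _ => 0, fun _ => by simp, fun s => isEmptyElim s⟩
  let b : Basis (Fin n) (ZMod 2) (GaloisField 2 n) :=
    Module.finBasisOfFinrankEq _ _ (GaloisField.finrank 2 hn)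
  have hcard : Nat.card (ℙ (GaloisField 2 n) (GaloisField 2 n × GaloisField 2 n)) = 2 ^ n + 1 := by
    rw [Projectivization.card_of_finrank_two _ _ (by simp), b.natCard_eq_two_pow]
  let e := Finite.equivFinOfCardEq hcard
  refine ⟨fun s => e (pauliLine b s), fun i => ?_,
    fun s t h => pauliOp_mul_comm_of_pauliLine_eq b (e.injective h)⟩
  rw [← Fintype.card_subtype, Fintype.card_eq_nat_card, ← card_pauliLine_fiber b (e.symm i)]
  exact Nat.card_congr (Equiv.subtypeEquivRight fun s => e.eq_symm_apply.symm)
end
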